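/- Let ω ⊂ ℝ^{n-1} be bounded and open, a' a unit vector of ℝ^{n-1}, δ, γ, ℓ > 0, c_m ∈ (0,1), and define ψ(x,t) := |x' − δa'|² − x_n² − t², φ := e^{γψ}, β_ℓ := inf_{x' ∈ ω}|x' − δa'|² − ℓ² , d_ℓ := e^{γβ_ℓ}, g_ℓ(δ) := ( sup_{x' ∈ ω}|x' − δa'|² − inf_{x' ∈ ω}|x' − δa'|² + ℓ² )^{1/2}. Assume √c_m · inf_{x' ∈ ω̄}|x' − δa'| > g_ℓ(δ) and set L = T = g_ℓ(δ) + ν for some ν > 0 with L > ℓ. Then, with d̃_ℓ := d_ℓ e^{−γν²}: φ(x', x_n, ±T) ≤ e^{γ(β_ℓ − ν²)} e^{−γ x_n²} for all (x', x_n) ∈ ω̄ × [−L, L], and there exists ε ∈ (0, (L − ℓ)/2) such that φ(x', x_n, t) ≤ d̃_ℓ whenever (x', x_n) ∈ ω̄ × [−L, L] and |t| ∈ [T − 2ε, T], and, symmetrically, φ(x', x_n, t) ≤ d̃_ℓ whenever (x', t) ∈ ω̄ × [−T, T] and |x_n| ∈ [L − 2ε, L]. -/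

import Mathlib

open MeasureTheory Real Set Filter
open scoped Topology InnerProductSpace ENNReal NNReal

noncomputable section

namespace Waveguide

/-- `ES m` is the Euclidean space `ℝ^m`. -/
abbrev ES (m : ℕ) := EuclideanSpace ℝ (Fin m)

/-- Squared `H^k(Ω)` Sobolev norm, computed with (classical) iterated derivatives. -/
def sobSq {m : ℕ} (k : ℕ) (Ω : Set (ES m)) (u : ES m → ℝ) : ℝ :=
  ∑ j ∈ Finset.range (k + 1), ∫ x in Ω, ‖iteratedFDeriv ℝ j u x‖ ^ 2

/-- `H^k(Ω)` Sobolev norm. -/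
def sobNorm {m : ℕ} (k : ℕ) (Ω : Set (ES m)) (u : ES m → ℝ) : ℝ :=
  Real.sqrt (sobSq k Ω u)

/-- Membership in the Sobolev space `H^k(Ω)` (smooth-representative model):
`u` is `C^k` on `Ω` and all its derivatives of order `≤ k` are square integrable on `Ω`. -/
def MemHk {m : ℕ} (k : ℕ) (Ω : Set (ES m)) (u : ES m → ℝ) : Prop :=
  ContDiffOn ℝ k u Ω ∧ ∀ j ≤ k, IntegrableOn (fun x => ‖iteratedFDeriv ℝ j u x‖ ^ 2) Ω

/-- Membership in `H¹₀(Ω)`: `u ∈ H¹(Ω)` and `u` can be approximated in the `H¹(Ω)` norm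
by smooth compactly supported functions with support inside `Ω`. -/
def MemH10 {m : ℕ} (Ω : Set (ES m)) (u : ES m → ℝ) : Prop :=
  MemHk 1 Ω u ∧ ∀ ε > 0, ∃ φ : ES m → ℝ, ContDiff ℝ (⊤ : ℕ∞) φ ∧ HasCompactSupport φ ∧
    tsupport φ ⊆ Ω ∧ sobSq 1 Ω (fun x => u x - φ x) < ε

/-- `ω` has a `C^k` boundary: near each boundary point, `ω` is the sublevel set of a
`C^k` defining function with nonvanishing differential. -/
def HasCkBoundary {m : ℕ} (k : ℕ) (ω : Set (ES m)) : Prop :=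
  ∀ x ∈ frontier ω, ∃ U : Set (ES m), IsOpen U ∧ x ∈ U ∧ ∃ f : ES m → ℝ,
    ContDiff ℝ k f ∧ ω ∩ U = {y ∈ U | f y < 0} ∧ ∀ y ∈ U, fderiv ℝ f y ≠ 0

/-- `‖c‖_{W^{k,∞}(Ω)} ≤ M` (smooth-representative model). -/
def WkInfBound {m : ℕ} (k : ℕ) (Ω : Set (ES m)) (c : ES m → ℝ) (M : ℝ) : Prop :=
  ContDiffOn ℝ k c Ω ∧ ∀ j ≤ k, ∀ x ∈ Ω, ‖iteratedFDeriv ℝ j c x‖ ≤ M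

/-- divergence of a vector field. -/
def divg {m : ℕ} (F : ES m → ES m) (x : ES m) : ℝ :=
  ∑ i, fderiv ℝ F x (EuclideanSpace.single i 1) i

variable {d : ℕ}

/-- the transverse variable `x'` of `x = (x', x_n)`. -/
def proj (x : ES (d + 1)) : ES d := WithLp.toLp 2 (fun i : Fin d => x i.castSucc)

/-- the axis variable `x_n` of `x = (x', x_n)`. -/
def lastc (x : ES (d + 1)) : ℝ := x (Fin.last d)

/-- the infinite cylinder `Ω = ω × ℝ`. -/
def cyl (ω : Set (ES d)) : Set (ES (d + 1)) := {x | proj x ∈ ω}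

/-- the truncated cylinder `Ω_L = ω × (-L, L)`. -/
def cylI (ω : Set (ES d)) (L : ℝ) : Set (ES (d + 1)) := {x | proj x ∈ ω ∧ |lastc x| < L}

/-- extension of a transverse vector `a' ∈ ℝ^{n-1}` by `0` in the axis direction. -/
def extv (a : ES d) : ES (d + 1) :=
  WithLp.toLp 2 (fun i : Fin (d + 1) => if h : (i : ℕ) < d then a ⟨i, h⟩ else 0)

/-- the transverse directional derivative `a'·∇_{x'} c` at `x`. -/
def ader (a : ES d) (c : ES (d + 1) → ℝ) (x : ES (d + 1)) : ℝ := fderiv ℝ c x (extv a)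

/-- a point `(x', x_n)` of the cylinder from its components. -/
def glue (x' : ES d) (s : ℝ) : ES (d + 1) :=
  WithLp.toLp 2 (Fin.snoc (α := fun _ => ℝ) x'.ofLp s)

/-- Data for the square root `A^{1/2}` of the self-adjoint operator `A = -∇·(c∇)` on `L²(Ω)`,
generated by the closed sesquilinear form `q_A[u] = ∫_Ω c |∇u|²` with form domain `H¹₀(Ω)`. -/
structure SqrtOp (d : ℕ) (Ω : Set (ES (d + 1))) (c : ES (d + 1) → ℝ) where
  /-- the operator `A^{1/2}` (with junk values outside its domain). -/
  S : (ES (d + 1) → ℝ) → (ES (d + 1) → ℝ)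
  /-- the domain of `A^{1/2}`. -/
  dom : Set (ES (d + 1) → ℝ)
  /-- `D(A^{1/2}) = D(q_A) = H¹₀(Ω)`. -/
  dom_eq : dom = {u | MemH10 Ω u}
  map_add : ∀ u ∈ dom, ∀ v ∈ dom, ∀ x ∈ Ω, S (fun y => u y + v y) x = S u x + S v x
  map_smul : ∀ u ∈ dom, ∀ a : ℝ, ∀ x ∈ Ω, S (fun y => a * u y) x = a * S u x
  /-- `A^{1/2}` is symmetric. -/
  symm : ∀ u ∈ dom, ∀ v ∈ dom, ∫ x in Ω, S u x * v x = ∫ x in Ω, u x * S v x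
  /-- `A^{1/2}` is generated by the form `q_A`:
  `⟨A^{1/2}u, A^{1/2}v⟩ = ∫_Ω c ∇u·∇v` for `u, v` in the form domain. -/
  form : ∀ u ∈ dom, ∀ v ∈ dom,
    ∫ x in Ω, S u x * S v x = ∫ x in Ω, c x * ⟪gradient u x, gradient v x⟫_ℝ
  /-- `A = A^{1/2} ∘ A^{1/2}` acts as `-∇·(c∇)` on its domain. -/
  acts : ∀ u ∈ dom, S u ∈ dom →
    ∀ᵐ x ∂(volume.restrict Ω), S (S u) x = -(divg (fun y => c y • gradient u y) x)

/-- the domain `D(A^{k/2})` of the `k/2`-th power of `A`, defined iteratively. -/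
def Dpow {d : ℕ} {Ω : Set (ES (d + 1))} {c : ES (d + 1) → ℝ} (P : SqrtOp d Ω c) :
    ℕ → Set (ES (d + 1) → ℝ)
  | 0 => {u | IntegrableOn (fun x => (u x) ^ 2) Ω}
  | k + 1 => {u | u ∈ Dpow P k ∧ u ∈ P.dom ∧ P.S u ∈ Dpow P k}

/-- the squared Hilbertian norm `‖u‖²_{D(A^{k/2})} = ∑_{j=0}^{k} ‖A^{j/2}u‖²_{L²(Ω)}`. -/
def DnormSq {d : ℕ} {Ω : Set (ES (d + 1))} {c : ES (d + 1) → ℝ} (P : SqrtOp d Ω c)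
    (k : ℕ) (u : ES (d + 1) → ℝ) : ℝ :=
  ∑ j ∈ Finset.range (k + 1), ∫ x in Ω, ((P.S)^[j] u x) ^ 2

/-- the norm of `D(A^{k/2})`. -/
def Dnorm {d : ℕ} {Ω : Set (ES (d + 1))} {c : ES (d + 1) → ℝ} (P : SqrtOp d Ω c)
    (k : ℕ) (u : ES (d + 1) → ℝ) : ℝ := Real.sqrt (DnormSq P k u)

/-- `v ∈ C⁰([0,T]; D(A^{k/2}))`. -/
def ContIntoD {d : ℕ} {Ω : Set (ES (d + 1))} {c : ES (d + 1) → ℝ} (P : SqrtOp d Ω c)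
    (k : ℕ) (T : ℝ) (v : ℝ → ES (d + 1) → ℝ) : Prop :=
  (∀ t ∈ Icc (0 : ℝ) T, v t ∈ Dpow P k) ∧
  ∀ t ∈ Icc (0 : ℝ) T, ∀ ε > 0, ∃ δ > 0, ∀ s ∈ Icc (0 : ℝ) T, |s - t| < δ →
    DnormSq P k (fun x => v s x - v t x) < ε

/-- `v ∈ C⁰([0,T]; H^k(Ω))`. -/
def ContIntoH {d : ℕ} (k : ℕ) (Ω : Set (ES (d + 1))) (T : ℝ)
    (v : ℝ → ES (d + 1) → ℝ) : Prop :=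
  (∀ t ∈ Icc (0 : ℝ) T, MemHk k Ω (v t)) ∧
  ∀ t ∈ Icc (0 : ℝ) T, ∀ ε > 0, ∃ δ > 0, ∀ s ∈ Icc (0 : ℝ) T, |s - t| < δ →
    sobSq k Ω (fun x => v s x - v t x) < ε

/-- `w = ∂_t v` in the weak (integrated, tested against `L²(Ω)`) sense on `[0,T]`. -/
def IsWeakTimeDeriv {d : ℕ} (Ω : Set (ES (d + 1))) (T : ℝ)
    (v w : ℝ → ES (d + 1) → ℝ) : Prop :=
  ∀ g : ES (d + 1) → ℝ, IntegrableOn (fun x => (g x) ^ 2) Ω → ∀ t ∈ Icc (0 : ℝ) T,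
    ∫ x in Ω, v t x * g x = (∫ x in Ω, v 0 x * g x) + ∫ s in (0: ℝ)..t, ∫ x in Ω, w s x * g x

/-- weak formulation of `∂_t² v - ∇·(c∇v) = f` with Dirichlet boundary conditions,
where `v1 = ∂_t v`. -/
def WeakWaveEq {d : ℕ} (Ω : Set (ES (d + 1))) (c : ES (d + 1) → ℝ) (T : ℝ)
    (v v1 f : ℝ → ES (d + 1) → ℝ) : Prop :=
  ∀ w : ES (d + 1) → ℝ, MemH10 Ω w → ∀ t ∈ Icc (0 : ℝ) T,
    ∫ x in Ω, v1 t x * w x = (∫ x in Ω, v1 0 x * w x)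
      + ∫ s in (0 : ℝ)..t, ((∫ x in Ω, f s x * w x)
          - ∫ x in Ω, c x * ⟪gradient (v s) x, gradient w x⟫_ℝ)

end Waveguide

namespace Waveguide

set_option maxHeartbeats 1000000 in
/-- upper bounds of the Carleman weight near the ends, Proposition 3.1,
estimates (d6)–(d7). With `L = T = g_ℓ(δ) + ν` and `d̃_ℓ = d_ℓ e^{-γν²}`:
`φ(x', x_n, ±T) ≤ e^{γ(β_ℓ-ν²)} e^{-γ x_n²}` on `ω̄ × [-L,L]`, and there is
`ε ∈ (0, (L-ℓ)/2)` such that `φ ≤ d̃_ℓ` for `|t| ∈ [T-2ε, T]` and, symmetrically,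
for `|x_n| ∈ [L-2ε, L]`. -/
theorem weight_upper_bound (d : ℕ) (hd : 1 ≤ d)
    (ω : Set (ES d)) (hω : IsOpen ω) (hωb : Bornology.IsBounded ω)
    (a : ES d) (ha : ‖a‖ = 1)
    (δ γ ℓ cm ν L T : ℝ) (hδ : 0 < δ) (hγ : 0 < γ) (hℓ : 0 < ℓ)
    (hcm : cm ∈ Ioo (0 : ℝ) 1) (hν : 0 < ν)
    (hg : Real.sqrt cm * sInf ((fun y => ‖y - δ • a‖) '' closure ω) >
      Real.sqrt (sSup ((fun y => ‖y - δ • a‖ ^ 2) '' ω)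
        - sInf ((fun y => ‖y - δ • a‖ ^ 2) '' ω) + ℓ ^ 2))
    (hL : L = Real.sqrt (sSup ((fun y => ‖y - δ • a‖ ^ 2) '' ω)
        - sInf ((fun y => ‖y - δ • a‖ ^ 2) '' ω) + ℓ ^ 2) + ν)
    (hT : T = Real.sqrt (sSup ((fun y => ‖y - δ • a‖ ^ 2) '' ω)
        - sInf ((fun y => ‖y - δ • a‖ ^ 2) '' ω) + ℓ ^ 2) + ν)
    (hLℓ : ℓ < L) :
    (∀ x' ∈ closure ω, ∀ xn ∈ Icc (-L) L, ∀ t : ℝ, t = T ∨ t = -T →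
      Real.exp (γ * (‖x' - δ • a‖ ^ 2 - xn ^ 2 - t ^ 2))
        ≤ Real.exp (γ * ((sInf ((fun y => ‖y - δ • a‖ ^ 2) '' ω) - ℓ ^ 2) - ν ^ 2))
            * Real.exp (-(γ * xn ^ 2))) ∧
    ∃ ε ∈ Ioo (0 : ℝ) ((L - ℓ) / 2),
      (∀ x' ∈ closure ω, ∀ xn ∈ Icc (-L) L, ∀ t : ℝ, |t| ∈ Icc (T - 2 * ε) T →
        Real.exp (γ * (‖x' - δ • a‖ ^ 2 - xn ^ 2 - t ^ 2))
          ≤ Real.exp (γ * (sInf ((fun y => ‖y - δ • a‖ ^ 2) '' ω) - ℓ ^ 2))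
              * Real.exp (-(γ * ν ^ 2))) ∧
      (∀ x' ∈ closure ω, ∀ t ∈ Icc (-T) T, ∀ xn : ℝ, |xn| ∈ Icc (L - 2 * ε) L →
        Real.exp (γ * (‖x' - δ • a‖ ^ 2 - xn ^ 2 - t ^ 2))
          ≤ Real.exp (γ * (sInf ((fun y => ‖y - δ • a‖ ^ 2) '' ω) - ℓ ^ 2))
              * Real.exp (-(γ * ν ^ 2))) := by

  classical
  set S := sSup ((fun y => ‖y - δ • a‖ ^ 2) '' ω) with hS
  set I := sInf ((fun y => ‖y - δ • a‖ ^ 2) '' ω) with hI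
  set g := Real.sqrt (S - I + ℓ ^ 2) with hgdef
  -- boundedness of the image
  obtain ⟨R, hR⟩ := hωb.subset_closedBall (0 : ES d)
  have hBdd : BddAbove ((fun y => ‖y - δ • a‖ ^ 2) '' ω) := by
    refine ⟨(R + δ * ‖a‖) ^ 2, ?_⟩
    rintro _ ⟨y, hy, rfl⟩
    show ‖y - δ • a‖ ^ 2 ≤ (R + δ * ‖a‖) ^ 2
    have h1 : ‖y - δ • a‖ ≤ R + δ * ‖a‖ := by
      have := hR hy
      simp only [Metric.mem_closedBall, dist_zero_right] at this
      calc ‖y - δ • a‖ ≤ ‖y‖ + ‖δ • a‖ := norm_sub_le _ _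
        _ ≤ R + δ * ‖a‖ := by
            rw [norm_smul, Real.norm_eq_abs, abs_of_pos hδ]; linarith
    exact pow_le_pow_left₀ (norm_nonneg _) h1 2
  have hIS : 0 ≤ S - I := by
    rcases ω.eq_empty_or_nonempty with h | ⟨y, hy⟩
    · simp [hS, hI, h]
    · have h1 : I ≤ ‖y - δ • a‖ ^ 2 :=
        csInf_le ⟨0, by rintro _ ⟨z, hz, rfl⟩; positivity⟩ ⟨y, hy, rfl⟩
      have h2 : ‖y - δ • a‖ ^ 2 ≤ S := le_csSup hBdd ⟨y, hy, rfl⟩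
      linarith
  have hgsq : g ^ 2 = S - I + ℓ ^ 2 := Real.sq_sqrt (by nlinarith)
  have hgpos : 0 < g := by
    rw [hgdef]; apply Real.sqrt_pos.2; nlinarith
  have hsup : ∀ x' ∈ closure ω, ‖x' - δ • a‖ ^ 2 ≤ S := by
    intro x' hx'
    have hcl : IsClosed {y : ES d | ‖y - δ • a‖ ^ 2 ≤ S} := by
      apply isClosed_le _ continuous_const
      exact (continuous_id.sub continuous_const).norm.pow 2
    have hsub : ω ⊆ {y : ES d | ‖y - δ • a‖ ^ 2 ≤ S} := fun y hy =>
      le_csSup hBdd ⟨y, hy, rfl⟩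
    exact closure_minimal hsub hcl hx'
  -- main estimate
  have key : ∀ x' ∈ closure ω, ∀ xn t : ℝ, g ^ 2 + ν ^ 2 ≤ t ^ 2 →
      Real.exp (γ * (‖x' - δ • a‖ ^ 2 - xn ^ 2 - t ^ 2))
        ≤ Real.exp (γ * ((I - ℓ ^ 2) - ν ^ 2)) * Real.exp (-(γ * xn ^ 2)) := by
    intro x' hx' xn t ht
    rw [← Real.exp_add, Real.exp_le_exp]
    have := hsup x' hx'
    nlinarith
  have hsqrtlt : Real.sqrt (g ^ 2 + ν ^ 2) < g + ν := by
    have : Real.sqrt (g ^ 2 + ν ^ 2) < Real.sqrt ((g + ν) ^ 2) := by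
      apply Real.sqrt_lt_sqrt (by positivity); nlinarith
    rwa [Real.sqrt_sq (by linarith)] at this
  have hTgν : T = g + ν := hT
  have hLgν : L = g + ν := hL
  constructor
  · intro x' hx' xn _ t ht
    have ht2 : g ^ 2 + ν ^ 2 ≤ t ^ 2 := by
      rcases ht with rfl | rfl
      · rw [hTgν]; nlinarith
      · rw [neg_pow, hTgν]; nlinarith [sq_nonneg (g + ν)]
    exact key x' hx' xn t ht2
  · set q := Real.sqrt (g ^ 2 + ν ^ 2) with hq
    have hqnn : 0 ≤ q := Real.sqrt_nonneg _
    have hqsq : q ^ 2 = g ^ 2 + ν ^ 2 := Real.sq_sqrt (by positivity)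
    refine ⟨min ((T - q) / 4) ((L - ℓ) / 4), ⟨?_, ?_⟩, ?_, ?_⟩
    · apply lt_min
      · rw [hTgν]; linarith
      · linarith
    · calc min ((T - q) / 4) ((L - ℓ) / 4) ≤ (L - ℓ) / 4 := min_le_right _ _
        _ < (L - ℓ) / 2 := by linarith
    · intro x' hx' xn _ t ht
      have hε : min ((T - q) / 4) ((L - ℓ) / 4) ≤ (T - q) / 4 := min_le_left _ _
      have h1 : q ≤ |t| := by
        have := ht.1
        have hTq : q < T := by rw [hTgν]; exact hsqrtlt
        linarith
      have ht2 : g ^ 2 + ν ^ 2 ≤ t ^ 2 := by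
        have h2 := pow_le_pow_left₀ hqnn h1 2
        rw [sq_abs] at h2
        linarith [hqsq]
      have := key x' hx' xn t ht2
      rw [show γ * ((I - ℓ ^ 2) - ν ^ 2) = γ * (I - ℓ ^ 2) + (-(γ * ν ^ 2)) by ring,
        Real.exp_add] at this
      calc Real.exp (γ * (‖x' - δ • a‖ ^ 2 - xn ^ 2 - t ^ 2))
          ≤ Real.exp (γ * (I - ℓ ^ 2)) * Real.exp (-(γ * ν ^ 2))
              * Real.exp (-(γ * xn ^ 2)) := this
        _ ≤ Real.exp (γ * (I - ℓ ^ 2)) * Real.exp (-(γ * ν ^ 2)) * 1 := by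
            apply mul_le_mul_of_nonneg_left _ (by positivity)
            exact Real.exp_le_one_iff.2 (neg_nonpos.2 (by positivity))
        _ = Real.exp (γ * (I - ℓ ^ 2)) * Real.exp (-(γ * ν ^ 2)) := mul_one _
    · intro x' hx' t _ xn hxn
      have hε : min ((T - q) / 4) ((L - ℓ) / 4) ≤ (T - q) / 4 := min_le_left _ _
      have h1 : q ≤ |xn| := by
        have := hxn.1
        have hLq : q < L := by rw [hLgν]; exact hsqrtlt
        have hLT : L = T := by rw [hLgν, hTgν]
        linarith
      have hxn2 : g ^ 2 + ν ^ 2 ≤ xn ^ 2 := by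
        have h2 := pow_le_pow_left₀ hqnn h1 2
        rw [sq_abs] at h2
        linarith [hqsq]
      have hkey : Real.exp (γ * (‖x' - δ • a‖ ^ 2 - t ^ 2 - xn ^ 2))
          ≤ Real.exp (γ * ((I - ℓ ^ 2) - ν ^ 2)) * Real.exp (-(γ * t ^ 2)) :=
        key x' hx' t xn hxn2
      rw [show γ * (‖x' - δ • a‖ ^ 2 - xn ^ 2 - t ^ 2)
          = γ * (‖x' - δ • a‖ ^ 2 - t ^ 2 - xn ^ 2) by ring]
      rw [show γ * ((I - ℓ ^ 2) - ν ^ 2) = γ * (I - ℓ ^ 2) + (-(γ * ν ^ 2)) by ring,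
        Real.exp_add] at hkey
      calc Real.exp (γ * (‖x' - δ • a‖ ^ 2 - t ^ 2 - xn ^ 2))
          ≤ Real.exp (γ * (I - ℓ ^ 2)) * Real.exp (-(γ * ν ^ 2))
              * Real.exp (-(γ * t ^ 2)) := hkey
        _ ≤ Real.exp (γ * (I - ℓ ^ 2)) * Real.exp (-(γ * ν ^ 2)) * 1 := by
            apply mul_le_mul_of_nonneg_left _ (by positivity)
            exact Real.exp_le_one_iff.2 (neg_nonpos.2 (by positivity))
        _ = Real.exp (γ * (I - ℓ ^ 2)) * Real.exp (-(γ * ν ^ 2)) := mul_one _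

end Waveguide
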